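/- arXiv:1801.02199 — 5 statements merged into one kernel-verified Lean document; each statement's English description precedes it below -/
import Mathlib

section
/- Let a : [n] × [n] → ℝ be symmetric, satisfying the anti-tree-metric property a(i,j) + a(k,l) ≥ min(a(i,k)+a(j,l), a(i,l)+a(j,k)) for all distinct i,j,k,l, and suppose that for every i ∈ [n] one has min_{j≠i} a(i,j) = α*, where α* is the global minimum of a over distinct pairs. Then a satisfies the anti-ultrametric property a(i,j) ≥ min(a(i,k), a(j,k)) for all distinct i,j,k. -/
/-! Fix a triangle `i, j, k` and pick `l` with `a k l = α*`, the minimum of row `k`. If `l` is `i`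
or `j`, the side `a i k` or `a j k` equals `α*`, which is at most `a i j`. Otherwise the
anti-tree-metric inequality for `i, j, k, l` reads `a i j + α* ≥ min (a i k + a j l) (a i l + a j k)`,
and since `a j l, a i l ≥ α*` the term `α*` cancels. -/

lemma min_le_of_min_add_le_add {m p q r s x : ℝ} (hq : m ≤ q) (hr : m ≤ r)
    (h : min (p + q) (r + s) ≤ x + m) : min p s ≤ x := by
  rcases min_le_iff.1 h with h | h
  · linarith [min_le_left p s]
  · linarith [min_le_right p s]

section AntiTreeMetric

variable {α : Type*} {a : α → α → ℝ} {m : ℝ}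

lemma min_le_of_row_attains_lowerBound (hsym : ∀ i j, a i j = a j i)
    (htree : ∀ i j k l : α, i ≠ j → i ≠ k → i ≠ l → j ≠ k → j ≠ l → k ≠ l →
      a i j + a k l ≥ min (a i k + a j l) (a i l + a j k))
    (hlow : ∀ p q, p ≠ q → m ≤ a p q) {i j k l : α} (hij : i ≠ j) (hjk : j ≠ k) (hik : i ≠ k)
    (hlk : l ≠ k) (hkl : a k l = m) :
    min (a i k) (a j k) ≤ a i j := by
  by_cases hli : l = i
  · subst hli
    calc min (a l k) (a j k) ≤ a l k := min_le_left _ _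
      _ = m := by rw [hsym, hkl]
      _ ≤ a l j := hlow l j hij
  by_cases hlj : l = j
  · subst hlj
    calc min (a i k) (a l k) ≤ a l k := min_le_right _ _
      _ = m := by rw [hsym, hkl]
      _ ≤ a i l := hlow i l hij
  have hquad := htree i j k l hij hik (Ne.symm hli) hjk (Ne.symm hlj) (Ne.symm hlk)
  rw [hkl] at hquad
  exact min_le_of_min_add_le_add (hlow j l (Ne.symm hlj)) (hlow i l (Ne.symm hli)) hquad

end AntiTreeMetric

theorem stmt4_general (n : ℕ) (a : Fin n → Fin n → ℝ)
    (hsym : ∀ i j, a i j = a j i)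
    (htree : ∀ i j k l : Fin n, i ≠ j → i ≠ k → i ≠ l → j ≠ k → j ≠ l → k ≠ l →
      a i j + a k l ≥ min (a i k + a j l) (a i l + a j k))
    (αstar : ℝ) (hα : IsLeast {v : ℝ | ∃ i j : Fin n, i ≠ j ∧ v = a i j} αstar)
    (hrow : ∀ i : Fin n, IsLeast {v : ℝ | ∃ j : Fin n, j ≠ i ∧ v = a i j} αstar) :
    ∀ i j k : Fin n, i ≠ j → j ≠ k → i ≠ k →
      a i j ≥ min (a i k) (a j k) := by
  intro i j k hij hjk hik
  obtain ⟨l, hlk, hkl⟩ := (hrow k).1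
  exact min_le_of_row_attains_lowerBound hsym htree (fun p q hpq => hα.2 ⟨p, q, hpq, rfl⟩)
    hij hjk hik hlk hkl.symm

/-- a real symmetric anti-tree metric `a` such that every row
attains the global minimum `α*` is an anti-ultrametric. -/
theorem stmt4 (n : ℕ) (hn : 3 ≤ n) (a : Fin n → Fin n → ℝ)
    (hsym : ∀ i j, a i j = a j i)
    (htree : ∀ i j k l : Fin n, i ≠ j → i ≠ k → i ≠ l → j ≠ k → j ≠ l → k ≠ l →
      a i j + a k l ≥ min (a i k + a j l) (a i l + a j k))
    (αstar : ℝ) (hα : IsLeast {v : ℝ | ∃ i j : Fin n, i ≠ j ∧ v = a i j} αstar)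
    (hrow : ∀ i : Fin n, IsLeast {v : ℝ | ∃ j : Fin n, j ≠ i ∧ v = a i j} αstar) :
    ∀ i j k : Fin n, i ≠ j → j ≠ k → i ≠ k →
      a i j ≥ min (a i k) (a j k) :=
  stmt4_general n a hsym htree αstar hα hrow
end

section
/- Let L be a laminar family of subsets of [n] and c : L → ℝ_{>0} a positive weight, and define a(i,j) := ∑ { c(L) : L ∈ L, i ∈ L, j ∈ L } for distinct i,j ∈ [n]. Then a satisfies the anti-ultrametric property: a(i,j) ≥ min(a(i,k), a(j,k)) for all distinct i,j,k ∈ [n]. -/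
/-!
Fix three points `i, j, k`. If some member of a laminar family contains `i` and `k` but not `j`,
then every member containing `j` and `k` meets it in `k` and is not inside it, so it contains it,
and hence contains `i`. So either every member through `i, k` passes through `j`, or every member
through `j, k` passes through `i`; with nonnegative weights the corresponding pair weight is
then dominated by `a(i, j)`.
-/

open Finset

variable {α : Type*} [DecidableEq α]

def IsLaminar (𝓛 : Finset (Finset α)) : Prop :=
  ∀ X ∈ 𝓛, ∀ Y ∈ 𝓛, X ⊆ Y ∨ Y ⊆ X ∨ X ∩ Y = ∅

def pairWeight {M : Type*} [AddCommMonoid M] (𝓛 : Finset (Finset α)) (c : Finset α → M)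
    (i j : α) : M :=
  ∑ L ∈ 𝓛.filter (fun L => i ∈ L ∧ j ∈ L), c L

namespace IsLaminar

variable {𝓛 : Finset (Finset α)}

theorem mem_of_separating_mem (h𝓛 : IsLaminar 𝓛) {i j k : α} {L₁ : Finset α} (hL₁ : L₁ ∈ 𝓛)
    (hi : i ∈ L₁) (hk : k ∈ L₁) (hj : j ∉ L₁) {L : Finset α} (hL : L ∈ 𝓛) (hjL : j ∈ L)
    (hkL : k ∈ L) : i ∈ L := by
  rcases h𝓛 L hL L₁ hL₁ with hsub | hsup | hdisj
  · exact absurd (hsub hjL) hj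
  · exact hsup hi
  · have hk' : k ∈ L ∩ L₁ := mem_inter.mpr ⟨hkL, hk⟩
    simp [hdisj] at hk'

theorem forall_mem_or_forall_mem (h𝓛 : IsLaminar 𝓛) (i j k : α) :
    (∀ L ∈ 𝓛, i ∈ L ∧ k ∈ L → i ∈ L ∧ j ∈ L) ∨
      (∀ L ∈ 𝓛, j ∈ L ∧ k ∈ L → i ∈ L ∧ j ∈ L) := by
  by_cases h : ∀ L ∈ 𝓛, i ∈ L → k ∈ L → j ∈ L
  · exact .inl fun L hL ⟨hi, hk⟩ => ⟨hi, h L hL hi hk⟩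
  · simp only [not_forall] at h
    obtain ⟨L₁, hL₁, hi, hk, hj⟩ := h
    exact .inr fun L hL ⟨hjL, hkL⟩ =>
      ⟨h𝓛.mem_of_separating_mem hL₁ hi hk hj hL hjL hkL, hjL⟩

theorem min_pairWeight_le {M : Type*} [AddCommMonoid M] [LinearOrder M] [IsOrderedAddMonoid M]
    (h𝓛 : IsLaminar 𝓛) {c : Finset α → M} (hc : ∀ L ∈ 𝓛, 0 ≤ c L) (i j k : α) :
    min (pairWeight 𝓛 c i k) (pairWeight 𝓛 c j k) ≤ pairWeight 𝓛 c i j := by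
  have hmono : ∀ {p : Finset α → Prop} [DecidablePred p],
      (∀ L ∈ 𝓛, p L → i ∈ L ∧ j ∈ L) → ∑ L ∈ 𝓛.filter p, c L ≤ pairWeight 𝓛 c i j :=
    fun hpq => sum_le_sum_of_subset_of_nonneg (monotone_filter_right 𝓛 hpq)
      fun L hL _ => hc L (mem_filter.mp hL).1
  rcases h𝓛.forall_mem_or_forall_mem i j k with hik | hjk
  · exact (min_le_left _ _).trans (hmono hik)
  · exact (min_le_right _ _).trans (hmono hjk)

end IsLaminar

/-- the quadratic coefficients induced by a positively weighted
laminar family satisfy the anti-ultrametric property. -/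
theorem stmt5 (n : ℕ) (𝓛 : Finset (Finset (Fin n)))
    (hlam : ∀ X ∈ 𝓛, ∀ Y ∈ 𝓛, X ⊆ Y ∨ Y ⊆ X ∨ X ∩ Y = ∅)
    (c : Finset (Fin n) → ℝ) (hc : ∀ L ∈ 𝓛, 0 < c L) :
    ∀ i j k : Fin n, i ≠ j → j ≠ k → i ≠ k →
      (∑ L ∈ 𝓛.filter (fun L => i ∈ L ∧ j ∈ L), c L)
        ≥ min (∑ L ∈ 𝓛.filter (fun L => i ∈ L ∧ k ∈ L), c L)
              (∑ L ∈ 𝓛.filter (fun L => j ∈ L ∧ k ∈ L), c L) :=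
  fun i j k _ _ _ =>
    IsLaminar.min_pairWeight_le (𝓛 := 𝓛) hlam (fun L hL => (hc L hL).le) i j k
end

section
/- Let a : [n] × [n] → ℝ be a symmetric function satisfying the anti-ultrametric property a(i,j) ≥ min(a(i,k), a(j,k)) for all distinct i,j,k, and let α* := min_{i≠j} a(i,j). Then there exist a laminar family L of proper subsets of [n] and a positive weight c : L → ℝ_{>0} such that a(i,j) = ∑{ c(L) : L ∈ L, i,j ∈ L } + α* for all distinct i,j ∈ [n]. -/
/-!
Cut `a` at every threshold `t`: the relation "`i = j` or `t ≤ a i j`" is an equivalence relation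
by the anti-ultrametric inequality, and it gets finer as `t` grows, so its classes over all
thresholds form a laminar family. Taking as thresholds the values of `a` above `α*`, and giving a
class at threshold `t` the gap between `t` and the next lower value, the classes containing both
`i` and `j` are exactly one per threshold `t ≤ a i j`, and their weights telescope to `a i j - α*`.
-/

open Finset

noncomputable section

/-- The largest element of `V` below `t`, or `t` itself if there is none. -/
def prevIn (V : Finset ℝ) (t : ℝ) : ℝ :=
  if h : {v ∈ V | v < t}.Nonempty then {v ∈ V | v < t}.max' h else t

theorem prevIn_mem_and_lt {V : Finset ℝ} {t : ℝ} (h : ∃ v ∈ V, v < t) :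
    prevIn V t ∈ V ∧ prevIn V t < t := by
  have hne : {v ∈ V | v < t}.Nonempty := by simpa [Finset.Nonempty] using h
  rw [prevIn, dif_pos hne]
  simpa using max'_mem _ hne

theorem le_prevIn {V : Finset ℝ} {t v : ℝ} (hv : v ∈ V) (hvt : v < t) : v ≤ prevIn V t := by
  have hmem : v ∈ {v ∈ V | v < t} := mem_filter.2 ⟨hv, hvt⟩
  rw [prevIn, dif_pos ⟨v, hmem⟩]
  exact le_max' _ _ hmem

theorem sum_sub_prevIn {V : Finset ℝ} {b x : ℝ} (hb : b ∈ V) (hx : x ∈ V) (hbx : b ≤ x) :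
    ∑ t ∈ V with b < t ∧ t ≤ x, (t - prevIn V t) = x - b := by
  induction hk : #{v ∈ V | v < x} using Nat.strong_induction_on generalizing x with
  | _ k ih =>
  rcases hbx.eq_or_lt with rfl | hbx
  · rw [sub_self, sum_eq_zero]
    intro t ht
    simp only [mem_filter] at ht
    linarith [ht.2.1, ht.2.2]
  obtain ⟨hpV, hpx⟩ := prevIn_mem_and_lt ⟨b, hb, hbx⟩
  set p := prevIn V x
  have hsplit : {t ∈ V | b < t ∧ t ≤ x} = insert x {t ∈ V | b < t ∧ t ≤ p} := by
    ext t
    simp only [mem_filter, mem_insert]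
    constructor
    · rintro ⟨htV, hbt, htx⟩
      rcases htx.eq_or_lt with rfl | htx
      · exact Or.inl rfl
      · exact Or.inr ⟨htV, hbt, le_prevIn htV htx⟩
    · rintro (rfl | ⟨htV, hbt, htp⟩)
      · exact ⟨hx, hbx, le_rfl⟩
      · exact ⟨htV, hbt, htp.trans hpx.le⟩
  have hcard : #{v ∈ V | v < p} < k := by
    rw [← hk]
    refine card_lt_card ((ssubset_iff_of_subset ?_).2 ⟨p, ?_, ?_⟩)
    · exact monotone_filter_right V fun v _ hv => hv.trans hpx
    · exact mem_filter.2 ⟨hpV, hpx⟩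
    · simp
  have hx_notMem : x ∉ {t ∈ V | b < t ∧ t ≤ p} := by simp [hpx]
  rw [hsplit, sum_insert hx_notMem, ih _ hcard hpV (le_prevIn hb hbx) rfl]
  ring

structure IsAntiUltrametric {α : Type*} (a : α → α → ℝ) : Prop where
  symm : ∀ i j, a i j = a j i
  min_le : ∀ i j k, i ≠ j → j ≠ k → i ≠ k → min (a i k) (a j k) ≤ a i j

section LevelCluster

variable {α : Type*} [Fintype α] [DecidableEq α]

def levelCluster (a : α → α → ℝ) (t : ℝ) (i : α) : Finset α :=
  {j | j = i ∨ t ≤ a i j}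

variable {a : α → α → ℝ} {s t : ℝ} {i j k : α}

@[simp]
theorem mem_levelCluster : j ∈ levelCluster a t i ↔ j = i ∨ t ≤ a i j := by
  simp [levelCluster]

theorem self_mem_levelCluster : i ∈ levelCluster a t i :=
  mem_levelCluster.2 (Or.inl rfl)

theorem mem_levelCluster_of_ne (hij : i ≠ j) : j ∈ levelCluster a t i ↔ t ≤ a i j := by
  simp [hij.symm]

theorem levelCluster_anti (hst : s ≤ t) : levelCluster a t i ⊆ levelCluster a s i := by
  intro j hj
  simp only [mem_levelCluster] at hj ⊢
  exact hj.imp_right hst.trans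

theorem mem_levelCluster_comm (hsym : ∀ i j, a i j = a j i) (h : j ∈ levelCluster a t i) :
    i ∈ levelCluster a t j := by
  simp only [mem_levelCluster] at h ⊢
  rw [hsym]
  exact h.imp_left Eq.symm

theorem mem_levelCluster_trans (ha : IsAntiUltrametric a)
    (hij : j ∈ levelCluster a t i) (hjk : k ∈ levelCluster a t j) : k ∈ levelCluster a t i := by
  rcases eq_or_ne j i with rfl | hji
  · exact hjk
  rcases eq_or_ne k j with rfl | hkj
  · exact hij
  rcases eq_or_ne k i with rfl | hki
  · exact self_mem_levelCluster
  rw [mem_levelCluster_of_ne hji.symm] at hij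
  rw [mem_levelCluster_of_ne hkj.symm] at hjk
  rw [mem_levelCluster_of_ne hki.symm]
  calc t ≤ min (a i j) (a k j) := le_min hij (ha.symm k j ▸ hjk)
    _ ≤ a i k := ha.min_le i k j hki.symm hkj hji.symm

theorem levelCluster_eq_of_mem (ha : IsAntiUltrametric a)
    (h : j ∈ levelCluster a t i) : levelCluster a t j = levelCluster a t i := by
  ext k
  exact ⟨mem_levelCluster_trans ha h,
    mem_levelCluster_trans ha (mem_levelCluster_comm ha.symm h)⟩

theorem levelCluster_laminar (ha : IsAntiUltrametric a) (s t : ℝ) (i j : α) :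
    levelCluster a s i ⊆ levelCluster a t j ∨ levelCluster a t j ⊆ levelCluster a s i ∨
      levelCluster a s i ∩ levelCluster a t j = ∅ := by
  rcases (levelCluster a s i ∩ levelCluster a t j).eq_empty_or_nonempty with h | ⟨z, hz⟩
  · exact Or.inr (Or.inr h)
  rw [mem_inter] at hz
  rw [← levelCluster_eq_of_mem ha hz.1, ← levelCluster_eq_of_mem ha hz.2]
  rcases le_total s t with hst | hts
  · exact Or.inr (Or.inl (levelCluster_anti hst))
  · exact Or.inl (levelCluster_anti hts)

end LevelCluster

def offDiagValues {α : Type*} [Fintype α] (a : α → α → ℝ) : Finset ℝ :=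
  univ.offDiag.image fun p => a p.1 p.2

theorem mem_offDiagValues {α : Type*} [Fintype α] {a : α → α → ℝ} {v : ℝ} :
    v ∈ offDiagValues a ↔ ∃ i j, i ≠ j ∧ a i j = v := by
  simp [offDiagValues]

section ClusterFamily

variable {α : Type*} [Fintype α] [DecidableEq α] (a : α → α → ℝ) (b : ℝ)

def clusterLevels : Finset ℝ :=
  {t ∈ offDiagValues a | b < t}

def clusterFamily : Finset (Finset α) :=
  (clusterLevels a b ×ˢ univ).image fun p => levelCluster a p.1 p.2

def clusterWeight (L : Finset α) : ℝ :=
  ∑ t ∈ clusterLevels a b with L ∈ univ.image (levelCluster a t),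
    (t - prevIn (offDiagValues a) t)

variable {a b}

theorem mem_clusterFamily {L : Finset α} :
    L ∈ clusterFamily a b ↔ ∃ t ∈ clusterLevels a b, ∃ i, levelCluster a t i = L := by
  simp [clusterFamily]

theorem clusterFamily_laminar (ha : IsAntiUltrametric a) :
    ∀ X ∈ clusterFamily a b, ∀ Y ∈ clusterFamily a b, X ⊆ Y ∨ Y ⊆ X ∨ X ∩ Y = ∅ := by
  simp only [mem_clusterFamily]
  rintro _ ⟨s, -, i, rfl⟩ _ ⟨t, -, j, rfl⟩
  exact levelCluster_laminar ha s t i j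

theorem clusterFamily_ne_univ (ha : IsAntiUltrametric a)
    (hb : b ∈ offDiagValues a) : ∀ L ∈ clusterFamily a b, L ≠ univ := by
  simp only [mem_clusterFamily]
  rintro _ ⟨t, ht, i, rfl⟩ huniv
  obtain ⟨p, q, hpq, rfl⟩ := mem_offDiagValues.1 hb
  have hp : levelCluster a t p = levelCluster a t i :=
    levelCluster_eq_of_mem ha (huniv ▸ mem_univ p)
  have hq : q ∈ levelCluster a t p := hp ▸ huniv ▸ mem_univ q
  rw [mem_levelCluster_of_ne hpq] at hq
  exact (mem_filter.1 ht).2.not_ge hq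

theorem clusterWeight_pos (hb : b ∈ offDiagValues a) :
    ∀ L ∈ clusterFamily a b, 0 < clusterWeight a b L := by
  simp only [mem_clusterFamily]
  rintro _ ⟨t, ht, i, rfl⟩
  refine sum_pos (fun s hs => ?_) ⟨t, mem_filter.2 ⟨ht, mem_image_of_mem _ (mem_univ i)⟩⟩
  obtain ⟨hs, hbs⟩ := mem_filter.1 (mem_filter.1 hs).1
  exact sub_pos.2 (prevIn_mem_and_lt ⟨b, hb, hbs⟩).2

/-- At a level `t`, the only cluster containing `i` is the class of `i`. -/
theorem filter_clusterFamily_levelCluster (ha : IsAntiUltrametric a)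
    {i j : α} (hij : i ≠ j) {t : ℝ} (ht : t ∈ clusterLevels a b) :
    {L ∈ clusterFamily a b | (i ∈ L ∧ j ∈ L) ∧ L ∈ univ.image (levelCluster a t)} =
      if t ≤ a i j then {levelCluster a t i} else ∅ := by
  ext L
  simp only [mem_filter, mem_image, mem_univ, true_and]
  split_ifs with hle
  · rw [mem_singleton]
    constructor
    · rintro ⟨-, ⟨hi, -⟩, x, rfl⟩
      exact (levelCluster_eq_of_mem ha hi).symm
    · rintro rfl
      exact ⟨mem_clusterFamily.2 ⟨t, ht, i, rfl⟩,
        ⟨self_mem_levelCluster, (mem_levelCluster_of_ne hij).2 hle⟩, i, rfl⟩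
  · simp only [notMem_empty, iff_false]
    rintro ⟨-, ⟨hi, hj⟩, x, rfl⟩
    rw [← levelCluster_eq_of_mem ha hi, mem_levelCluster_of_ne hij] at hj
    exact hle hj

theorem sum_clusterWeight (ha : IsAntiUltrametric a)
    (hb : b ∈ offDiagValues a) {i j : α} (hij : i ≠ j) (hbij : b ≤ a i j) :
    ∑ L ∈ clusterFamily a b with i ∈ L ∧ j ∈ L, clusterWeight a b L = a i j - b := by
  unfold clusterWeight
  rw [sum_comm' (t' := clusterLevels a b)
    (s' := fun t => {L ∈ clusterFamily a b | (i ∈ L ∧ j ∈ L) ∧ L ∈ univ.image (levelCluster a t)})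
    (by intro L t; simp only [mem_filter]; tauto)]
  have hlevel : ∀ t ∈ clusterLevels a b,
      ∑ L ∈ clusterFamily a b with (i ∈ L ∧ j ∈ L) ∧ L ∈ univ.image (levelCluster a t),
        (t - prevIn (offDiagValues a) t) =
      if t ≤ a i j then t - prevIn (offDiagValues a) t else 0 := by
    intro t ht
    rw [filter_clusterFamily_levelCluster ha hij ht]
    split_ifs <;> simp
  rw [sum_congr rfl hlevel, ← sum_filter, clusterLevels, filter_filter,
    sum_sub_prevIn hb (mem_offDiagValues.2 ⟨i, j, hij, rfl⟩) hbij]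

end ClusterFamily

theorem stmt6_general (n : ℕ) (a : Fin n → Fin n → ℝ)
    (hsym : ∀ i j, a i j = a j i)
    (hultra : ∀ i j k : Fin n, i ≠ j → j ≠ k → i ≠ k →
      a i j ≥ min (a i k) (a j k))
    (αstar : ℝ) (hα : IsLeast {v : ℝ | ∃ i j : Fin n, i ≠ j ∧ v = a i j} αstar) :
    ∃ (𝓛 : Finset (Finset (Fin n))) (c : Finset (Fin n) → ℝ),
      (∀ X ∈ 𝓛, ∀ Y ∈ 𝓛, X ⊆ Y ∨ Y ⊆ X ∨ X ∩ Y = ∅) ∧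
      (∀ L ∈ 𝓛, L ≠ Finset.univ) ∧
      (∀ L ∈ 𝓛, 0 < c L) ∧
      (∀ i j : Fin n, i ≠ j →
        a i j = (∑ L ∈ 𝓛.filter (fun L => i ∈ L ∧ j ∈ L), c L) + αstar) := by
  have ha : IsAntiUltrametric a := ⟨hsym, hultra⟩
  have hmem : αstar ∈ offDiagValues a := by
    obtain ⟨i, j, hij, rfl⟩ := hα.1
    exact mem_offDiagValues.2 ⟨i, j, hij, rfl⟩
  refine ⟨clusterFamily a αstar, clusterWeight a αstar, clusterFamily_laminar ha,
    clusterFamily_ne_univ ha hmem, clusterWeight_pos hmem, fun i j hij => ?_⟩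
  rw [sum_clusterWeight ha hmem hij (hα.2 ⟨i, j, hij, rfl⟩)]
  ring

/-- any real symmetric anti-ultrametric `a` with global minimum `α*`
is represented by a positively weighted laminar family of proper subsets of `[n]`:
`a i j = ∑ { c L : L ∈ 𝓛, i,j ∈ L } + α*` for all distinct `i,j`. -/
theorem stmt6 (n : ℕ) (hn : 2 ≤ n) (a : Fin n → Fin n → ℝ)
    (hsym : ∀ i j, a i j = a j i)
    (hultra : ∀ i j k : Fin n, i ≠ j → j ≠ k → i ≠ k →
      a i j ≥ min (a i k) (a j k))
    (αstar : ℝ) (hα : IsLeast {v : ℝ | ∃ i j : Fin n, i ≠ j ∧ v = a i j} αstar) :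
    ∃ (𝓛 : Finset (Finset (Fin n))) (c : Finset (Fin n) → ℝ),
      (∀ X ∈ 𝓛, ∀ Y ∈ 𝓛, X ⊆ Y ∨ Y ⊆ X ∨ X ∩ Y = ∅) ∧
      (∀ L ∈ 𝓛, L ≠ Finset.univ) ∧
      (∀ L ∈ 𝓛, 0 < c L) ∧
      (∀ i j : Fin n, i ≠ j →
        a i j = (∑ L ∈ 𝓛.filter (fun L => i ∈ L ∧ j ∈ L), c L) + αstar) :=
  stmt6_general n a hsym hultra αstar hα
end
end

section
/- Let A = {A_1,…,A_r} be a partition of [n] with all blocks of size at least 2, and let X ⊆ [n] be a set that cuts at least two blocks (i.e., at least two blocks A_p satisfy ∅ ≠ X ∩ A_p ≠ A_p). Then the function x ↦ (∑_{i∈X} x_i)^2 is not affine on U_A: there is no u ∈ ℝ^n and γ ∈ ℝ with (∑_{i∈X} x_i)^2 = ∑_i u_i x_i + γ for all x ∈ U_A. -/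
/-!
Every transversal of `A` is the range of a section `σ` choosing `σ s ∈ A s`, so an affine
representation would give `(∑ s, h (σ s))² = ∑ s, u (σ s) + γ` for all sections, with `h` the
indicator of `X`. Fix a section and vary only its values in two cut blocks `p ≠ q`, taking
`a, a'` in `A p` and `b, b'` in `A q`. In the mixed second difference over these four sections
the affine right-hand side cancels, while the square leaves `2 (h a - h a') (h b - h b')`.
Choosing `a, b ∈ X` and `a', b' ∉ X` makes this `2 ≠ 0`.
-/

open Finset Function

theorem Fintype.sum_update {κ R : Type*} [Fintype κ] [DecidableEq κ] [AddCommGroup R]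
    (v : κ → R) (p : κ) (α : R) :
    ∑ s, update v p α s = ∑ s, v s + (α - v p) := by
  rw [sum_update_of_mem (mem_univ p), sum_eq_add_sum_sdiff_singleton_of_mem (mem_univ p) v]
  abel

theorem Fintype.sum_update_update {κ R : Type*} [Fintype κ] [DecidableEq κ] [AddCommGroup R]
    {p q : κ} (hpq : p ≠ q) (v : κ → R) (α β : R) :
    ∑ s, update (update v p α) q β s = ∑ s, v s + (α - v p) + (β - v q) := by
  rw [sum_update, sum_update, update_of_ne hpq.symm]

theorem sub_mul_sub_eq_zero_of_sq_sum_affine {κ ι : Type*} [Fintype κ] [DecidableEq κ]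
    {A : κ → Set ι} (hA : ∀ s, (A s).Nonempty) {h u : ι → ℝ} {γ : ℝ}
    (hu : ∀ σ ∈ Set.univ.pi A, (∑ s, h (σ s)) ^ 2 = ∑ s, u (σ s) + γ)
    {p q : κ} (hpq : p ≠ q) {a a' b b' : ι} (ha : a ∈ A p) (ha' : a' ∈ A p)
    (hb : b ∈ A q) (hb' : b' ∈ A q) :
    (h a - h a') * (h b - h b') = 0 := by
  choose σ hσ using hA
  have key : ∀ c ∈ A p, ∀ d ∈ A q,
      (∑ s, h (σ s) + (h c - h (σ p)) + (h d - h (σ q))) ^ 2 =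
        ∑ s, u (σ s) + (u c - u (σ p)) + (u d - u (σ q)) + γ := by
    intro c hc d hd
    have hsec : update (update σ p c) q d ∈ Set.univ.pi A :=
      (Set.update_mem_pi_iff_of_mem ((Set.update_mem_pi_iff_of_mem fun s _ => hσ s).mpr
        fun _ => hc)).mpr fun _ => hd
    have := hu _ hsec
    simp only [← comp_apply (f := h), ← comp_apply (f := u), comp_update] at this
    rwa [Fintype.sum_update_update hpq, Fintype.sum_update_update hpq] at this
  linear_combination (key a ha b hb - key a ha b' hb' - key a' ha' b hb + key a' ha' b' hb') / 2

/-- For injective `σ`, this is the characteristic vector of the transversal `range σ`. -/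
noncomputable def fiberCount {κ ι : Type*} [Fintype κ] [DecidableEq ι] (σ : κ → ι) (i : ι) : ℝ :=
  ∑ s, if σ s = i then 1 else 0

section fiberCount

variable {κ ι : Type*} [Fintype κ] [DecidableEq ι]

theorem sum_fiberCount (σ : κ → ι) (S : Finset ι) :
    ∑ i ∈ S, fiberCount σ i = ∑ s, if σ s ∈ S then 1 else 0 := by
  simp only [fiberCount]
  rw [sum_comm]
  simp

theorem sum_mul_fiberCount [Fintype ι] (σ : κ → ι) (u : ι → ℝ) :
    ∑ i, u i * fiberCount σ i = ∑ s, u (σ s) := by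
  simp only [fiberCount, mul_sum, mul_ite, mul_one, mul_zero]
  rw [sum_comm]
  simp

theorem fiberCount_eq_zero_or_one {σ : κ → ι} (hσ : Injective σ) (i : ι) :
    fiberCount σ i = 0 ∨ fiberCount σ i = 1 := by
  rw [fiberCount, sum_ite_zero _ _ fun s _ t _ hs ht => hσ (hs.trans ht.symm)]
  split_ifs <;> simp

end fiberCount

theorem sq_sum_affine_on_sections {κ ι : Type*} [Fintype κ] [Fintype ι] [DecidableEq ι]
    {A : κ → Finset ι} (hdisj : Pairwise (Disjoint on A)) {X : Finset ι} {u : ι → ℝ} {γ : ℝ}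
    (hu : ∀ x : ι → ℝ, (∀ i, x i = 0 ∨ x i = 1) → (∀ q, ∑ i ∈ A q, x i = 1) →
      (∑ i ∈ X, x i) ^ 2 = ∑ i, u i * x i + γ) :
    ∀ σ ∈ Set.univ.pi (fun s => (A s : Set ι)),
      (∑ s, if σ s ∈ X then 1 else 0) ^ 2 = ∑ s, u (σ s) + γ := by
  intro σ hσ
  have mem_iff : ∀ s q, σ s ∈ A q ↔ s = q := fun s q =>
    ⟨fun h => by_contra fun hsq => disjoint_left.mp (hdisj hsq) (hσ s trivial) h,
      fun h => h ▸ hσ s trivial⟩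
  have hinj : Injective σ := fun s t hst => (mem_iff s t).mp (hst ▸ hσ t trivial)
  have hblock : ∀ q, ∑ i ∈ A q, fiberCount σ i = 1 := fun q => by
    rw [sum_fiberCount, Fintype.sum_eq_single q fun s hs => if_neg (hs ∘ (mem_iff s q).mp),
      if_pos ((mem_iff q q).mpr rfl)]
  simpa only [sum_fiberCount, sum_mul_fiberCount] using
    hu _ (fiberCount_eq_zero_or_one hinj) hblock

theorem stmt9_general (n r : ℕ) (A : Fin r → Finset (Fin n))
    (hdisj : ∀ p q : Fin r, p ≠ q → Disjoint (A p) (A q))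
    (hsize : ∀ p : Fin r, 2 ≤ (A p).card)
    (X : Finset (Fin n))
    (hcut : ∃ p q : Fin r, p ≠ q ∧
      (X ∩ A p).Nonempty ∧ X ∩ A p ≠ A p ∧
      (X ∩ A q).Nonempty ∧ X ∩ A q ≠ A q) :
    ¬ ∃ (u : Fin n → ℝ) (γ : ℝ),
        ∀ x : Fin n → ℝ, (∀ i, x i = 0 ∨ x i = 1) →
          (∀ q : Fin r, ∑ i ∈ A q, x i = 1) →
          (∑ i ∈ X, x i) ^ 2 = ∑ i, u i * x i + γ := by
  rintro ⟨u, γ, hu⟩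
  obtain ⟨p, q, hpq, ⟨a, ha⟩, hXp, ⟨b, hb⟩, hXq⟩ := hcut
  obtain ⟨a', ha', ha'X⟩ := not_subset.mp (mt inter_eq_right.mpr hXp)
  obtain ⟨b', hb', hb'X⟩ := not_subset.mp (mt inter_eq_right.mpr hXq)
  rw [mem_inter] at ha hb
  have hne : ∀ s, (A s : Set (Fin n)).Nonempty := fun s =>
    coe_nonempty.mpr (card_pos.mp (by have := hsize s; omega))
  have hmixed := sub_mul_sub_eq_zero_of_sq_sum_affine (h := fun i => if i ∈ X then 1 else 0) hne
    (sq_sum_affine_on_sections hdisj hu) hpq ha.2 ha' hb.2 hb'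
  simp [ha.1, hb.1, ha'X, hb'X] at hmixed

/-- if every block has size ≥ 2 and `X` cuts at least two blocks,
then `(∑_{i∈X} x_i)²` is not affine on `U_A`. -/
theorem stmt9 (n r : ℕ) (A : Fin r → Finset (Fin n))
    (hdisj : ∀ p q : Fin r, p ≠ q → Disjoint (A p) (A q))
    (hcover : ∀ i : Fin n, ∃ p : Fin r, i ∈ A p)
    (hsize : ∀ p : Fin r, 2 ≤ (A p).card)
    (X : Finset (Fin n))
    (hcut : ∃ p q : Fin r, p ≠ q ∧
      (X ∩ A p).Nonempty ∧ X ∩ A p ≠ A p ∧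
      (X ∩ A q).Nonempty ∧ X ∩ A q ≠ A q) :
    ¬ ∃ (u : Fin n → ℝ) (γ : ℝ),
        ∀ x : Fin n → ℝ, (∀ i, x i = 0 ∨ x i = 1) →
          (∀ q : Fin r, ∑ i ∈ A q, x i = 1) →
          (∑ i ∈ X, x i) ^ 2 = ∑ i, u i * x i + γ :=
  stmt9_general n r A hdisj hsize X hcut
end

section
/- Let A = {A_1,…,A_r} be a partition of [n] and let X, Y ⊆ [n] each cut at least two blocks of A. If {⟨X⟩∩X, ⟨X⟩∖X} = {⟨Y⟩∩Y, ⟨Y⟩∖Y} (same cutting support and same bipartition of it), then the function x ↦ (∑_{i∈X} x_i)^2 − (∑_{i∈Y} x_i)^2 is affine on U_A := {x ∈ {0,1}^n : ∑_{i∈A_q} x_i = 1 for all q}. -/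
/-!
On `U_A` every block contributes exactly `1` to a block-sum, so `∑_{i∈X} x_i` is the sum over
`⟨X⟩ ∩ X` plus the (constant) number of blocks contained in `X`. If `⟨X⟩ ∩ X = ⟨Y⟩ ∩ Y`, then
`∑_X x − ∑_Y x` is constant on `U_A`; if `⟨X⟩ ∩ X = ⟨Y⟩ \ Y`, then `∑_X x + ∑_Y x` is constant,
because `⟨Y⟩` is a union of blocks. Either way `∑_X x = c ± ∑_Y x`, and then
`(∑_X x)² − (∑_Y x)² = c² ± 2c ∑_Y x` is affine.
-/

open Finset Function

lemma exists_affine_sq_sub_sq {α : Type*} [Fintype α] [DecidableEq α] (P : (α → ℝ) → Prop)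
    (X Y : Finset α) (c ε : ℝ) (hε : ε ^ 2 = 1)
    (hXY : ∀ x, P x → ∑ i ∈ X, x i = c + ε * ∑ i ∈ Y, x i) :
    ∃ (u : α → ℝ) (γ : ℝ), ∀ x, P x →
      (∑ i ∈ X, x i) ^ 2 - (∑ i ∈ Y, x i) ^ 2 = ∑ i, u i * x i + γ := by
  refine ⟨fun i => if i ∈ Y then 2 * c * ε else 0, c ^ 2, fun x hx => ?_⟩
  have hlin : ∑ i, (if i ∈ Y then 2 * c * ε else 0) * x i = 2 * c * ε * ∑ i ∈ Y, x i := by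
    simp only [ite_mul, zero_mul, sum_ite_mem, univ_inter, mul_sum]
  rw [hlin, hXY x hx]
  linear_combination (∑ i ∈ Y, x i) ^ 2 * hε

section Blocks

variable {α ι : Type*} [DecidableEq α] {A : ι → Finset α} {x : α → ℝ}

lemma sum_biUnion_eq_card (hdisj : Pairwise (Disjoint on A))
    (hx : ∀ p, ∑ i ∈ A p, x i = 1) (s : Finset ι) :
    ∑ i ∈ s.biUnion A, x i = #s := by
  rw [sum_biUnion (hdisj.set_pairwise _)]
  simp [hx]

/-- A block meets `X` in nothing, in all of it, or in a cut. -/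
lemma sum_inter_block_eq (hx : ∀ p, ∑ i ∈ A p, x i = 1) (X : Finset α) (p : ι) :
    ∑ i ∈ X ∩ A p, x i =
      (if (X ∩ A p).Nonempty ∧ X ∩ A p ≠ A p then ∑ i ∈ X ∩ A p, x i else 0) +
        if A p ⊆ X then 1 else 0 := by
  by_cases hsub : A p ⊆ X
  · have hfull : X ∩ A p = A p := inter_eq_right.2 hsub
    simp [hfull, hsub, hx p]
  · have hfull : X ∩ A p ≠ A p := fun h => hsub (inter_eq_right.1 h)
    by_cases hcut : (X ∩ A p).Nonempty
    · simp [hcut, hfull, hsub]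
    · simp [not_nonempty_iff_eq_empty.1 hcut, hsub]

variable [Fintype ι]

def cutBlocks (A : ι → Finset α) (X : Finset α) : Finset ι :=
  univ.filter fun p => (X ∩ A p).Nonempty ∧ X ∩ A p ≠ A p

/-- The cutting support `⟨X⟩`. -/
def cutSupport (A : ι → Finset α) (X : Finset α) : Finset α :=
  (cutBlocks A X).biUnion A

lemma sum_cutSupport (hdisj : Pairwise (Disjoint on A))
    (hx : ∀ p, ∑ i ∈ A p, x i = 1) (X : Finset α) :
    ∑ i ∈ cutSupport A X, x i = #(cutBlocks A X) :=
  sum_biUnion_eq_card hdisj hx _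

lemma sum_eq_sum_blocks (hdisj : Pairwise (Disjoint on A)) (hcover : ∀ a, ∃ p, a ∈ A p)
    (X : Finset α) :
    ∑ i ∈ X, x i = ∑ p, ∑ i ∈ X ∩ A p, x i := by
  have hX : X = univ.biUnion fun p => X ∩ A p := by
    rw [← inter_biUnion, eq_comm, inter_eq_left]
    intro a _
    obtain ⟨p, hp⟩ := hcover a
    exact mem_biUnion.2 ⟨p, mem_univ p, hp⟩
  conv_lhs => rw [hX]
  exact sum_biUnion fun p _ q _ hpq =>
    (hdisj hpq).mono inter_subset_right inter_subset_right

lemma sum_eq_sum_cutSupport_inter_add_card (hdisj : Pairwise (Disjoint on A))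
    (hcover : ∀ a, ∃ p, a ∈ A p) (hx : ∀ p, ∑ i ∈ A p, x i = 1) (X : Finset α) :
    ∑ i ∈ X, x i = ∑ i ∈ cutSupport A X ∩ X, x i + #{p | A p ⊆ X} := by
  have hcut : ∑ i ∈ cutSupport A X ∩ X, x i = ∑ p ∈ cutBlocks A X, ∑ i ∈ X ∩ A p, x i := by
    rw [cutSupport, biUnion_inter, sum_biUnion fun p _ q _ hpq =>
      (hdisj hpq).mono inter_subset_left inter_subset_left]
    exact sum_congr rfl fun p _ => by rw [inter_comm]
  rw [sum_eq_sum_blocks hdisj hcover, hcut, cutBlocks, sum_filter,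
    sum_congr rfl fun p _ => sum_inter_block_eq hx X p, sum_add_distrib, sum_boole]

lemma exists_sum_eq_add_sign_mul_sum (hdisj : Pairwise (Disjoint on A))
    (hcover : ∀ a, ∃ p, a ∈ A p) {X Y : Finset α} (hsame : cutSupport A X ∩ X = cutSupport A Y ∩ Y ∨
      cutSupport A X ∩ X = cutSupport A Y \ Y) :
    ∃ c ε : ℝ, ε ^ 2 = 1 ∧ ∀ x : α → ℝ, (∀ p, ∑ i ∈ A p, x i = 1) →
      ∑ i ∈ X, x i = c + ε * ∑ i ∈ Y, x i := by
  rcases hsame with hsame | hsame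
  · refine ⟨#{p | A p ⊆ X} - #{p | A p ⊆ Y}, 1, one_pow 2, fun x hx => ?_⟩
    rw [sum_eq_sum_cutSupport_inter_add_card hdisj hcover hx X,
      sum_eq_sum_cutSupport_inter_add_card hdisj hcover hx Y, hsame]
    ring
  · refine ⟨#{p | A p ⊆ X} + #{p | A p ⊆ Y} + #(cutBlocks A Y), -1, by norm_num,
      fun x hx => ?_⟩
    have hsplit := sum_inter_add_sum_sdiff (cutSupport A Y) Y x
    rw [sum_cutSupport hdisj hx] at hsplit
    rw [sum_eq_sum_cutSupport_inter_add_card hdisj hcover hx X,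
      sum_eq_sum_cutSupport_inter_add_card hdisj hcover hx Y, hsame]
    linarith

end Blocks

theorem stmt17_general (n r : ℕ) (A : Fin r → Finset (Fin n))
    (hdisj : ∀ p q : Fin r, p ≠ q → Disjoint (A p) (A q))
    (hcover : ∀ i : Fin n, ∃ p : Fin r, i ∈ A p)
    (X Y : Finset (Fin n))
    (aveX aveY : Finset (Fin n))
    (haveX : aveX = (Finset.univ.filter
      (fun p : Fin r => (X ∩ A p).Nonempty ∧ X ∩ A p ≠ A p)).biUnion A)
    (haveY : aveY = (Finset.univ.filter
      (fun p : Fin r => (Y ∩ A p).Nonempty ∧ Y ∩ A p ≠ A p)).biUnion A)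
    (hsame : (aveX ∩ X = aveY ∩ Y ∧ aveX \ X = aveY \ Y) ∨
             (aveX ∩ X = aveY \ Y ∧ aveX \ X = aveY ∩ Y)) :
    ∃ (u : Fin n → ℝ) (γ : ℝ),
      ∀ x : Fin n → ℝ, (∀ i, x i = 0 ∨ x i = 1) →
        (∀ q : Fin r, ∑ i ∈ A q, x i = 1) →
        (∑ i ∈ X, x i) ^ 2 - (∑ i ∈ Y, x i) ^ 2 = ∑ i, u i * x i + γ := by
  subst haveX haveY
  obtain ⟨c, ε, hε, hXY⟩ :=
    exists_sum_eq_add_sign_mul_sum hdisj hcover (hsame.imp And.left And.left)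
  obtain ⟨u, γ, haffine⟩ :=
    exists_affine_sq_sub_sq (fun x => ∀ q, ∑ i ∈ A q, x i = 1) X Y c ε hε hXY
  exact ⟨u, γ, fun x _ hx => haffine x hx⟩

/-- if two `A`-cuts `X, Y` have the same cutting support and induce
the same bipartition of it, then `(∑_{i∈X} x_i)² − (∑_{i∈Y} x_i)²` is affine on
`U_A`. -/
theorem stmt17 (n r : ℕ) (A : Fin r → Finset (Fin n))
    (hdisj : ∀ p q : Fin r, p ≠ q → Disjoint (A p) (A q))
    (hcover : ∀ i : Fin n, ∃ p : Fin r, i ∈ A p)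
    (hne : ∀ p : Fin r, (A p).Nonempty)
    (X Y : Finset (Fin n))
    (hcutX : ∃ p q : Fin r, p ≠ q ∧
      (X ∩ A p).Nonempty ∧ X ∩ A p ≠ A p ∧ (X ∩ A q).Nonempty ∧ X ∩ A q ≠ A q)
    (hcutY : ∃ p q : Fin r, p ≠ q ∧
      (Y ∩ A p).Nonempty ∧ Y ∩ A p ≠ A p ∧ (Y ∩ A q).Nonempty ∧ Y ∩ A q ≠ A q)
    (aveX aveY : Finset (Fin n))
    (haveX : aveX = (Finset.univ.filter
      (fun p : Fin r => (X ∩ A p).Nonempty ∧ X ∩ A p ≠ A p)).biUnion A)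
    (haveY : aveY = (Finset.univ.filter
      (fun p : Fin r => (Y ∩ A p).Nonempty ∧ Y ∩ A p ≠ A p)).biUnion A)
    (hsame : (aveX ∩ X = aveY ∩ Y ∧ aveX \ X = aveY \ Y) ∨
             (aveX ∩ X = aveY \ Y ∧ aveX \ X = aveY ∩ Y)) :
    ∃ (u : Fin n → ℝ) (γ : ℝ),
      ∀ x : Fin n → ℝ, (∀ i, x i = 0 ∨ x i = 1) →
        (∀ q : Fin r, ∑ i ∈ A q, x i = 1) →
        (∑ i ∈ X, x i) ^ 2 - (∑ i ∈ Y, x i) ^ 2 = ∑ i, u i * x i + γ :=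
  stmt17_general n r A hdisj hcover X Y aveX aveY haveX haveY hsame
end
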